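/- arXiv:2410.19952 — 2 statements merged into one kernel-verified Lean document; each statement's English description precedes it below -/
import Mathlib

section
/- Let M be a positive definite real block matrix of the form M = [[δ, δ m₁ᵀ, m₂ᵀ], [δ m₁, δ M₁₁, m₁ m₂ᵀ], [m₂, m₂ m₁ᵀ, M₂₂]], where δ is a scalar, M₁₁ and M₂₂ are square matrices, and m₁, m₂ are column vectors of the appropriate dimensions. Then the (2,3)-block and the (3,2)-block of the inverse matrix M⁻¹ are zero matrices. -/
/-!
Let `B = M₂₂ - δ⁻¹ m₂ m₂ᵀ` be the Schur complement. The matrix `M` sends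
`(-δ⁻¹ m₂ᵀ z, 0, z)` to `(0, 0, B z)`; since `M` is injective, so is `B`, hence `B` is
invertible and `M⁻¹ (0, 0, w) = (-δ⁻¹ m₂ᵀ B⁻¹ w, 0, B⁻¹ w)` has vanishing middle block.
The shape of `M` is preserved by transposition, which handles the `(3,2)`-block.
-/

open Matrix

section
variable {K a b : Type*} [Field K]

def blockForm (δ : K) (m₁ : a → K) (m₂ : b → K) (M₁₁ : Matrix a a K) (M₂₂ : Matrix b b K) :
    Matrix (Unit ⊕ a ⊕ b) (Unit ⊕ a ⊕ b) K
  | .inl _, .inl _ => δ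
  | .inl _, .inr (.inl i) => δ * m₁ i
  | .inl _, .inr (.inr j) => m₂ j
  | .inr (.inl i), .inl _ => δ * m₁ i
  | .inr (.inl i), .inr (.inl i') => δ * M₁₁ i i'
  | .inr (.inl i), .inr (.inr j) => m₁ i * m₂ j
  | .inr (.inr j), .inl _ => m₂ j
  | .inr (.inr j), .inr (.inl i) => m₂ j * m₁ i
  | .inr (.inr j), .inr (.inr j') => M₂₂ j j'

def schurLift [Fintype b] (δ : K) (m₂ : b → K) (z : b → K) : Unit ⊕ a ⊕ b → K :=
  Sum.elim (fun _ => -(δ⁻¹ * (m₂ ⬝ᵥ z))) (Sum.elim 0 z)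

variable {δ : K} {m₁ : a → K} {m₂ : b → K} {M₁₁ : Matrix a a K} {M₂₂ : Matrix b b K}

theorem transpose_blockForm :
    (blockForm δ m₁ m₂ M₁₁ M₂₂)ᵀ = blockForm δ m₁ m₂ M₁₁ᵀ M₂₂ᵀ := by
  ext (_ | i | j) (_ | i' | j') <;> simp [blockForm, mul_comm]

theorem blockForm_mulVec_schurLift [Fintype a] [Fintype b] (hδ : δ ≠ 0) (z : b → K) :
    blockForm δ m₁ m₂ M₁₁ M₂₂ *ᵥ schurLift δ m₂ z =
      Sum.elim (0 : Unit → K) (Sum.elim (0 : a → K) ((M₂₂ - δ⁻¹ • vecMulVec m₂ m₂) *ᵥ z)) := by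
  ext (_ | i | j) <;>
    simp [blockForm, schurLift, mulVec, dotProduct, Fintype.sum_sum_type, sub_mul,
      vecMulVec_apply, mul_assoc, ← Finset.mul_sum, hδ] <;>
    field_simp <;> ring

theorem isUnit_det_schurComplement [Fintype a] [Fintype b] [DecidableEq a] [DecidableEq b]
    (hδ : δ ≠ 0) (hM : IsUnit (blockForm δ m₁ m₂ M₁₁ M₂₂).det) :
    IsUnit (M₂₂ - δ⁻¹ • vecMulVec m₂ m₂).det := by
  rw [isUnit_iff_ne_zero, Ne, ← exists_mulVec_eq_zero_iff]
  rintro ⟨z, hz, hBz⟩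
  refine isUnit_iff_ne_zero.mp hM
    (exists_mulVec_eq_zero_iff.mp ⟨schurLift δ m₂ z, fun h => hz ?_, ?_⟩)
  · exact funext fun j => congrFun h (.inr (.inr j))
  · rw [blockForm_mulVec_schurLift hδ, hBz]
    ext (_ | _ | _) <;> rfl

theorem inv_blockForm_inr_inl_inr_inr [Fintype a] [Fintype b] [DecidableEq a] [DecidableEq b]
    (hδ : δ ≠ 0) (hM : IsUnit (blockForm δ m₁ m₂ M₁₁ M₂₂).det) (i : a) (j : b) :
    (blockForm δ m₁ m₂ M₁₁ M₂₂)⁻¹ (.inr (.inl i)) (.inr (.inr j)) = 0 := by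
  set B := M₂₂ - δ⁻¹ • vecMulVec m₂ m₂
  set z := B⁻¹ *ᵥ Pi.single j 1
  have hz : blockForm δ m₁ m₂ M₁₁ M₂₂ *ᵥ schurLift δ m₂ z = Pi.single (.inr (.inr j)) 1 := by
    rw [blockForm_mulVec_schurLift hδ, mulVec_mulVec,
      mul_nonsing_inv _ (isUnit_det_schurComplement hδ hM), one_mulVec]
    ext (_ | _ | j') <;> simp [Pi.single_apply]
  have := congrFun (congrArg ((blockForm δ m₁ m₂ M₁₁ M₂₂)⁻¹ *ᵥ ·) hz) (.inr (.inl i))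
  simpa [mulVec_mulVec, nonsing_inv_mul _ hM, mulVec_single_one, schurLift] using this.symm

theorem inv_blockForm_inr_inr_inr_inl [Fintype a] [Fintype b] [DecidableEq a] [DecidableEq b]
    (hδ : δ ≠ 0) (hM : IsUnit (blockForm δ m₁ m₂ M₁₁ M₂₂).det) (j : b) (i : a) :
    (blockForm δ m₁ m₂ M₁₁ M₂₂)⁻¹ (.inr (.inr j)) (.inr (.inl i)) = 0 := by
  have := inv_blockForm_inr_inl_inr_inr (M₁₁ := M₁₁ᵀ) (M₂₂ := M₂₂ᵀ) (m₁ := m₁) hδ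
    (by rwa [← transpose_blockForm, det_transpose]) i j
  rwa [← transpose_blockForm, ← transpose_nonsing_inv, transpose_apply] at this

end

/-- The block matrix `M = [[δ, δ m₁ᵀ, m₂ᵀ], [δ m₁, δ M₁₁, m₁ m₂ᵀ], [m₂, m₂ m₁ᵀ, M₂₂]]`,
indexed by `Unit ⊕ a ⊕ b`. If it is positive definite, then the `(2,3)` and `(3,2)` blocks of
its inverse vanish. -/
theorem stmt_0 {a b : Type*} [Fintype a] [Fintype b] [DecidableEq a] [DecidableEq b]
    (δ : ℝ) (m₁ : a → ℝ) (m₂ : b → ℝ) (M₁₁ : Matrix a a ℝ) (M₂₂ : Matrix b b ℝ)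
    (M : Matrix (Unit ⊕ a ⊕ b) (Unit ⊕ a ⊕ b) ℝ)
    (h11 : ∀ u v : Unit, M (Sum.inl u) (Sum.inl v) = δ)
    (h12 : ∀ (u : Unit) (i : a), M (Sum.inl u) (Sum.inr (Sum.inl i)) = δ * m₁ i)
    (h13 : ∀ (u : Unit) (j : b), M (Sum.inl u) (Sum.inr (Sum.inr j)) = m₂ j)
    (h21 : ∀ (i : a) (u : Unit), M (Sum.inr (Sum.inl i)) (Sum.inl u) = δ * m₁ i)
    (h22 : ∀ i i' : a, M (Sum.inr (Sum.inl i)) (Sum.inr (Sum.inl i')) = δ * M₁₁ i i')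
    (h23 : ∀ (i : a) (j : b), M (Sum.inr (Sum.inl i)) (Sum.inr (Sum.inr j)) = m₁ i * m₂ j)
    (h31 : ∀ (j : b) (u : Unit), M (Sum.inr (Sum.inr j)) (Sum.inl u) = m₂ j)
    (h32 : ∀ (j : b) (i : a), M (Sum.inr (Sum.inr j)) (Sum.inr (Sum.inl i)) = m₂ j * m₁ i)
    (h33 : ∀ j j' : b, M (Sum.inr (Sum.inr j)) (Sum.inr (Sum.inr j')) = M₂₂ j j')
    (hM : M.PosDef) :
    (∀ (i : a) (j : b), M⁻¹ (Sum.inr (Sum.inl i)) (Sum.inr (Sum.inr j)) = 0) ∧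
    (∀ (j : b) (i : a), M⁻¹ (Sum.inr (Sum.inr j)) (Sum.inr (Sum.inl i)) = 0) := by
  have hMeq : M = blockForm δ m₁ m₂ M₁₁ M₂₂ := by
    ext (_ | i | j) (_ | i' | j') <;> simp [blockForm, *]
  subst hMeq
  have hδ : δ ≠ 0 := (hM.diag_pos (i := .inl ())).ne'
  have hdet : IsUnit (blockForm δ m₁ m₂ M₁₁ M₂₂).det :=
    (isUnit_iff_isUnit_det _).mp hM.isUnit
  exact ⟨inv_blockForm_inr_inl_inr_inr hδ hdet, inv_blockForm_inr_inr_inr_inl hδ hdet⟩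
end

section
/- Let α ∈ (0,2) and let Λ be a −α-homogeneous Borel measure on ℝ^d, finite on sets bounded away from the origin and satisfying ∫_{{|x_u| ≤ 1 ∀u∈U}} x_i² dΛ(x) < ∞ for all i, where U ⊆ {1,…,d} is nonempty. Define Λ^{(ε)} as the pushforward under x ↦ x / a_ε of the restriction of Λ to {x : |x_u| ≤ ε ∀u ∈ U}, with a_ε = ε^{1−α/2}. Then for every h > 0 and every coordinate i, Λ^{(ε)}({x : |x_i| ≥ h}) → 0 as ε ↓ 0. -/
/-!
By `-α`-homogeneity, the mass that `Λ^{(ε)}` gives to `{|x_i| ≥ h}` equals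
`ε^{-α} Λ({|x_u| ≤ 1 ∀ u ∈ U, |x_i| ≥ h ε^{-α/2}})`. On that set `ε^{-α} ≤ h^{-2} x_i²`, so the
mass is at most `h^{-2}` times the second moment of `x_i` over the part of the unit box where
`|x_i| ≥ h ε^{-α/2}`. The second moment is finite and the threshold tends to `∞`, so this tail
vanishes.
-/

open MeasureTheory Filter Set Topology
open scoped ENNReal

section Tail

variable {X : Type*} [MeasurableSpace X] {μ : Measure X}

lemma tendsto_measure_setOf_le_abs_atTop [IsFiniteMeasure μ] {g : X → ℝ} (hg : Measurable g) :
    Tendsto (fun M : ℝ => μ {x | M ≤ |g x|}) atTop (𝓝 0) := by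
  have hempty : ⋂ M : ℝ, {x | M ≤ |g x|} = ∅ :=
    eq_empty_of_forall_notMem fun x hx => (lt_add_one |g x|).not_ge (mem_iInter.1 hx _)
  have := tendsto_measure_iInter_atTop (μ := μ) (s := fun M : ℝ => {x | M ≤ |g x|})
    (fun M => (measurableSet_le measurable_const hg.abs).nullMeasurableSet)
    (fun M N hMN x hx => hMN.trans hx) ⟨0, measure_ne_top μ _⟩
  rwa [hempty, measure_empty] at this

lemma tendsto_setLIntegral_setOf_le_abs_atTop {f : X → ℝ≥0∞} (hf : ∫⁻ x, f x ∂μ ≠ ∞)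
    {g : X → ℝ} (hg : Measurable g) :
    Tendsto (fun M : ℝ => ∫⁻ x in {x | M ≤ |g x|}, f x ∂μ) atTop (𝓝 0) := by
  have := isFiniteMeasure_withDensity hf
  refine (tendsto_measure_setOf_le_abs_atTop (μ := μ.withDensity f) hg).congr fun M => ?_
  exact withDensity_apply _ (measurableSet_le measurable_const hg.abs)

lemma mul_measure_setOf_le_abs_le_setLIntegral_sq {g : X → ℝ} (hg : Measurable g)
    {M : ℝ} (hM : 0 ≤ M) :
    ENNReal.ofReal (M ^ 2) * μ {x | M ≤ |g x|}
      ≤ ∫⁻ x in {x | M ≤ |g x|}, ENNReal.ofReal (g x ^ 2) ∂μ := by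
  rw [← setLIntegral_const]
  refine setLIntegral_mono (hg.pow_const 2).ennreal_ofReal fun x hx => ?_
  rw [← sq_abs (g x)]
  exact ENNReal.ofReal_le_ofReal (pow_le_pow_left₀ hM hx 2)

end Tail

section Coordinates

variable {ι : Type*}

lemma measurableSet_setOf_forall_abs_apply_le [Countable ι] (U : Set ι) (r : ℝ) :
    MeasurableSet {x : ι → ℝ | ∀ u ∈ U, |x u| ≤ r} := by
  simp only [ofPred_forall]
  exact .biInter U.to_countable fun u _ =>
    measurableSet_le (measurable_pi_apply u).abs measurable_const

lemma preimage_smul_setOf_le_abs_apply (i : ι) {a : ℝ} (ha : 0 < a) (r : ℝ) :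
    (fun x : ι → ℝ => a • x) ⁻¹' {x | r ≤ |x i|} = {x | r / a ≤ |x i|} := by
  ext x
  simp [abs_mul, abs_of_pos ha, div_le_iff₀ ha, mul_comm]

lemma preimage_smul_setOf_forall_abs_apply_le (U : Set ι) {a : ℝ} (ha : 0 < a) (r : ℝ) :
    (fun x : ι → ℝ => a • x) ⁻¹' {x | ∀ u ∈ U, |x u| ≤ r} = {x | ∀ u ∈ U, |x u| ≤ r / a} := by
  ext x
  simp [abs_mul, abs_of_pos ha, le_div_iff₀ ha, mul_comm]

end Coordinates

def MeasureTheory.Measure.IsHomogeneous {E : Type*} [SMul ℝ E] [MeasurableSpace E] (Λ : Measure E) (β : ℝ) :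
    Prop :=
  ∀ c : ℝ, 0 < c → ∀ A : Set E, MeasurableSet A →
    Λ ((fun x => c • x) '' A) = ENNReal.ofReal (c ^ β) * Λ A

lemma MeasureTheory.Measure.IsHomogeneous.map_smul {E : Type*} [AddCommGroup E] [Module ℝ E]
    [MeasurableSpace E] [MeasurableConstSMul ℝ E] {Λ : Measure E} {α : ℝ}
    (hhom : Λ.IsHomogeneous (-α)) {c : ℝ} (hc : 0 < c) :
    Λ.map (fun x => c • x) = ENNReal.ofReal (c ^ α) • Λ := by
  ext A hA
  rw [Measure.map_apply (measurable_const_smul c) hA, preimage_smul₀ hc.ne', ← image_smul,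
    hhom _ (inv_pos.2 hc) _ hA, Real.inv_rpow hc.le, Real.rpow_neg hc.le, inv_inv]
  rfl

section Rescaling

variable {ι : Type*} [Countable ι] {Λ : Measure (ι → ℝ)} {α : ℝ}

lemma map_smul_restrict_setOf_le_abs_apply (hhom : Λ.IsHomogeneous (-α)) (U : Set ι) (i : ι)
    {ε c : ℝ} (hε : 0 < ε) (hc : 0 < c) (h : ℝ) :
    Measure.map (fun x : ι → ℝ => c⁻¹ • x) (Λ.restrict {x | ∀ u ∈ U, |x u| ≤ ε})
        {x | h ≤ |x i|}
      = ENNReal.ofReal (ε ^ (-α)) *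
          Λ.restrict {x | ∀ u ∈ U, |x u| ≤ 1} {x | h * c / ε ≤ |x i|} := by
  have hεinv : 0 < ε⁻¹ := inv_pos.2 hε
  have hmeas (r : ℝ) : MeasurableSet {x : ι → ℝ | r ≤ |x i|} :=
    measurableSet_le measurable_const (measurable_pi_apply i).abs
  calc Measure.map (fun x : ι → ℝ => c⁻¹ • x) (Λ.restrict {x | ∀ u ∈ U, |x u| ≤ ε})
        {x | h ≤ |x i|}
      = Λ ({x | h * c / ε / ε⁻¹ ≤ |x i|} ∩ {x | ∀ u ∈ U, |x u| ≤ 1 / ε⁻¹}) := by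
        rw [Measure.map_apply (measurable_const_smul _) (hmeas h),
          Measure.restrict_apply (measurable_const_smul _ (hmeas h)),
          preimage_smul_setOf_le_abs_apply i (inv_pos.2 hc)]
        field_simp
    _ = Λ.map (fun x => ε⁻¹ • x) ({x | h * c / ε ≤ |x i|} ∩ {x | ∀ u ∈ U, |x u| ≤ 1}) := by
        rw [Measure.map_apply (measurable_const_smul _)
          ((hmeas _).inter (measurableSet_setOf_forall_abs_apply_le U 1)), preimage_inter,
          preimage_smul_setOf_le_abs_apply i hεinv,
          preimage_smul_setOf_forall_abs_apply_le U hεinv]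
    _ = ENNReal.ofReal (ε ^ (-α)) *
          Λ.restrict {x | ∀ u ∈ U, |x u| ≤ 1} {x | h * c / ε ≤ |x i|} := by
        rw [hhom.map_smul hεinv, Real.inv_rpow hε.le, ← Real.rpow_neg hε.le,
          Measure.restrict_apply (hmeas _)]
        rfl

lemma map_smul_restrict_setOf_le_abs_le (hhom : Λ.IsHomogeneous (-α)) (U : Set ι) (i : ι) {ε : ℝ}
    (hε : 0 < ε) {h : ℝ} (hh : 0 < h) :
    Measure.map (fun x : ι → ℝ => (ε ^ (1 - α / 2))⁻¹ • x)
        (Λ.restrict {x | ∀ u ∈ U, |x u| ≤ ε}) {x | h ≤ |x i|}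
      ≤ ENNReal.ofReal (h ^ 2)⁻¹ * ∫⁻ x in {x | h * ε ^ (-(α / 2)) ≤ |x i|},
          ENNReal.ofReal (x i ^ 2) ∂Λ.restrict {x | ∀ u ∈ U, |x u| ≤ 1} := by
  have hthreshold : h * ε ^ (1 - α / 2) / ε = h * ε ^ (-(α / 2)) := by
    rw [mul_div_assoc, ← Real.rpow_sub_one hε.ne']
    ring_nf
  have hweight : ε ^ (-α) = (h ^ 2)⁻¹ * (h * ε ^ (-(α / 2))) ^ 2 := by
    have hsq : (ε ^ (-(α / 2))) ^ 2 = ε ^ (-α) := by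
      rw [← Real.rpow_natCast, ← Real.rpow_mul hε.le]
      ring_nf
    rw [mul_pow, hsq]
    field_simp
  rw [map_smul_restrict_setOf_le_abs_apply hhom U i hε (Real.rpow_pos_of_pos hε _) h,
    hthreshold, hweight, ENNReal.ofReal_mul (by positivity), mul_assoc]
  gcongr
  exact mul_measure_setOf_le_abs_le_setLIntegral_sq (measurable_pi_apply i) (by positivity)

end Rescaling

theorem stmt_16_general {d : ℕ} (Λ : Measure (Fin d → ℝ)) (α : ℝ) (hα : 0 < α)
    (hhom : ∀ c : ℝ, 0 < c → ∀ E : Set (Fin d → ℝ), MeasurableSet E →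
      Λ ((fun x => c • x) '' E) = ENNReal.ofReal (c ^ (-α)) * Λ E)
    (U : Set (Fin d))
    (hmom : ∀ i : Fin d,
      ∫⁻ x in {x : Fin d → ℝ | ∀ u ∈ U, |x u| ≤ 1}, ENNReal.ofReal ((x i) ^ 2) ∂Λ < ∞)
    (h : ℝ) (hh : 0 < h) (i : Fin d) :
    Tendsto (fun ε : ℝ =>
        Measure.map (fun x : Fin d → ℝ => (ε ^ (1 - α / 2))⁻¹ • x)
          (Λ.restrict {x | ∀ u ∈ U, |x u| ≤ ε}) {x | h ≤ |x i|})
      (nhdsWithin 0 (Set.Ioi 0)) (nhds 0) := by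
  have hthreshold : Tendsto (fun ε : ℝ => h * ε ^ (-(α / 2))) (𝓝[>] 0) atTop :=
    (tendsto_rpow_neg_nhdsGT_zero (by linarith)).const_mul_atTop hh
  have hupper := ENNReal.Tendsto.const_mul (a := ENNReal.ofReal (h ^ 2)⁻¹)
    ((tendsto_setLIntegral_setOf_le_abs_atTop (hmom i).ne (measurable_pi_apply i)).comp
      hthreshold) (.inr ENNReal.ofReal_ne_top)
  rw [mul_zero] at hupper
  refine tendsto_of_tendsto_of_tendsto_of_le_of_le' tendsto_const_nhds hupper
    (.of_forall fun _ => zero_le) ?_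
  filter_upwards [self_mem_nhdsWithin] with ε hε
  exact map_smul_restrict_setOf_le_abs_le hhom U i hε hh

/-- Vanishing of the rescaled small-jump measure: `Λ^{(ε)}({x : |x_i| ≥ h}) → 0` as `ε ↓ 0`,
where `Λ^{(ε)}` is the pushforward under `x ↦ x / ε^{1-α/2}` of the restriction of a
`-α`-homogeneous measure `Λ` to `{x : |x_u| ≤ ε ∀ u ∈ U}`. -/
theorem stmt_16 {d : ℕ} (Λ : Measure (Fin d → ℝ)) (α : ℝ) (hα : 0 < α) (hα2 : α < 2)
    (hhom : ∀ c : ℝ, 0 < c → ∀ E : Set (Fin d → ℝ), MeasurableSet E →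
      Λ ((fun x => c • x) '' E) = ENNReal.ofReal (c ^ (-α)) * Λ E)
    (U : Set (Fin d)) (hU : U.Nonempty)
    (hmom : ∀ i : Fin d,
      ∫⁻ x in {x : Fin d → ℝ | ∀ u ∈ U, |x u| ≤ 1}, ENNReal.ofReal ((x i) ^ 2) ∂Λ < ∞)
    (h : ℝ) (hh : 0 < h) (i : Fin d) :
    Tendsto (fun ε : ℝ =>
        Measure.map (fun x : Fin d → ℝ => (ε ^ (1 - α / 2))⁻¹ • x)
          (Λ.restrict {x | ∀ u ∈ U, |x u| ≤ ε}) {x | h ≤ |x i|})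
      (nhdsWithin 0 (Set.Ioi 0)) (nhds 0) :=
  stmt_16_general Λ α hα hhom U hmom h hh i
end
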